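/- For any g in GL_n(R) and any ε > 0, the map g acts on the set b(g⁻,ε) = {x ∈ P(R^n) : d(x, H_g⁻) > ε} by contraction: for any distinct x, y in b(g⁻,ε), we have d(g·x, g·y)/d(x,y) ≤ σ₂(g)/(ε² σ₁(g)), where σ₁(g) ≥ σ₂(g) are the two largest singular values of g. -/

import Mathlib

/- STATEMENT 0: For any `g ∈ GL_n(ℝ)` (given through its Cartan/singular value
decomposition `g = k' ∘ diag(a) ∘ k` with `k, k'` orthogonal and
`a 0 ≥ a 1 ≥ ⋯ > 0`) and any `ε > 0`, the projective action of `g` contracts the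
region `b(g⁻, ε) = {x ∈ P(ℝⁿ) : d(x, H_g⁻) > ε}`:
for distinct points `x = ℝv`, `y = ℝw` in `b(g⁻, ε)`,
`d(g x, g y) / d(x, y) ≤ σ₂(g)/(ε² σ₁(g))`. -/

open scoped RealInnerProductSpace
noncomputable section

/-- Projective distance `d(ℝv, ℝw) = ‖v ∧ w‖ / (‖v‖ ‖w‖)`. -/
def projDist {n : ℕ} (v w : EuclideanSpace ℝ (Fin n)) : ℝ :=
  Real.sqrt (‖v‖ ^ 2 * ‖w‖ ^ 2 - ⟪v, w⟫ ^ 2) / (‖v‖ * ‖w‖)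

/-- Distance from the projective point `ℝv` to the projective hyperplane with
normal vector `u`. -/
def distToHyp {n : ℕ} (v u : EuclideanSpace ℝ (Fin n)) : ℝ :=
  |⟪v, u⟫| / (‖v‖ * ‖u‖)

/-- The diagonal map with entries `a`. -/
def diagMap {n : ℕ} (a : Fin n → ℝ) (v : EuclideanSpace ℝ (Fin n)) :
    EuclideanSpace ℝ (Fin n) :=
  (WithLp.equiv 2 (Fin n → ℝ)).symm (fun i => a i * v i)

/-! In the coordinates `k v`, `k w` the map `g` is the diagonal map `diag(a)` up to isometries.
By Lagrange's identity `2 ‖v ∧ w‖² = ∑ᵢⱼ (vᵢwⱼ - vⱼwᵢ)²`, and `diag(a)` multiplies the `(i, j)`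
term by `(aᵢaⱼ)² ≤ (a₀a₁)²`, so `‖gv ∧ gw‖ ≤ σ₁σ₂ ‖v ∧ w‖`. On the other side, a vector `v` at
distance `> ε` from `H_g⁻` has first coordinate `|(k v)₀| > ε ‖v‖`, so `‖g v‖ ≥ σ₁ ε ‖v‖`. -/

section Gram

variable {E F : Type*} [NormedAddCommGroup E] [InnerProductSpace ℝ E]
  [NormedAddCommGroup F] [InnerProductSpace ℝ F]

/-- The Gram determinant `‖v ∧ w‖²`. -/
def gramDet (v w : E) : ℝ := ‖v‖ ^ 2 * ‖w‖ ^ 2 - ⟪v, w⟫ ^ 2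

@[simp]
lemma gramDet_map (f : E →ₗᵢ[ℝ] F) (v w : E) : gramDet (f v) (f w) = gramDet v w := by
  simp [gramDet]

end Gram

lemma two_mul_sum_sq_mul_sum_sq_sub_sq_sum_mul {ι R : Type*} [Fintype ι] [CommRing R]
    (f g : ι → R) :
    2 * ((∑ i, f i ^ 2) * (∑ i, g i ^ 2) - (∑ i, f i * g i) ^ 2)
      = ∑ i, ∑ j, (f i * g j - f j * g i) ^ 2 := by
  have expand : ∑ i, ∑ j, (f i * g j - f j * g i) ^ 2
      = ∑ i, ∑ j, f i ^ 2 * g j ^ 2 + ∑ i, ∑ j, f j ^ 2 * g i ^ 2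
        - 2 * ∑ i, ∑ j, f i * g i * (f j * g j) := by
    simp only [Finset.mul_sum, ← Finset.sum_add_distrib, ← Finset.sum_sub_distrib]
    exact Finset.sum_congr rfl fun i _ => Finset.sum_congr rfl fun j _ => by ring
  rw [expand, Finset.sum_comm (f := fun i j => f j ^ 2 * g i ^ 2), ← Finset.sum_mul_sum,
    ← Finset.sum_mul_sum, sq (∑ i, f i * g i)]
  ring

lemma two_mul_gramDet_eq_sum {ι : Type*} [Fintype ι] (v w : EuclideanSpace ℝ ι) :
    2 * gramDet v w = ∑ i, ∑ j, (v i * w j - v j * w i) ^ 2 := by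
  rw [gramDet, EuclideanSpace.real_norm_sq_eq, EuclideanSpace.real_norm_sq_eq,
    ← two_mul_sum_sq_mul_sum_sq_sub_sq_sum_mul]
  simp [PiLp.inner_apply, mul_comm]

lemma projDist_eq {n : ℕ} (v w : EuclideanSpace ℝ (Fin n)) :
    projDist v w = √(gramDet v w) / (‖v‖ * ‖w‖) := rfl

lemma projDist_nonneg {n : ℕ} (v w : EuclideanSpace ℝ (Fin n)) : 0 ≤ projDist v w := by
  rw [projDist_eq]; positivity

lemma projDist_map {m n : ℕ} (f : EuclideanSpace ℝ (Fin m) →ₗᵢ[ℝ] EuclideanSpace ℝ (Fin n))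
    (v w : EuclideanSpace ℝ (Fin m)) : projDist (f v) (f w) = projDist v w := by
  simp [projDist_eq]

lemma distToHyp_symm_single {n : ℕ}
    (k : EuclideanSpace ℝ (Fin n) ≃ₗᵢ[ℝ] EuclideanSpace ℝ (Fin n))
    (v : EuclideanSpace ℝ (Fin n)) (i : Fin n) :
    distToHyp v (k.symm (EuclideanSpace.single i 1)) = |k v i| / ‖v‖ := by
  rw [distToHyp, ← k.inner_map_map]
  simp [EuclideanSpace.inner_single_right]

lemma mul_norm_lt_abs_of_lt_distToHyp {n : ℕ}
    (k : EuclideanSpace ℝ (Fin n) ≃ₗᵢ[ℝ] EuclideanSpace ℝ (Fin n))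
    {v : EuclideanSpace ℝ (Fin n)} (hv : v ≠ 0) {i : Fin n} {ε : ℝ}
    (h : ε < distToHyp v (k.symm (EuclideanSpace.single i 1))) : ε * ‖k v‖ < |k v i| := by
  rwa [distToHyp_symm_single, lt_div_iff₀ (norm_pos_iff.mpr hv), ← k.norm_map] at h

section Diagonal

variable {n : ℕ}

lemma diagMap_apply (a : Fin n → ℝ) (v : EuclideanSpace ℝ (Fin n)) (i : Fin n) :
    diagMap a v i = a i * v i := rfl

lemma abs_mul_abs_le_norm_diagMap (a : Fin n → ℝ) (v : EuclideanSpace ℝ (Fin n)) (i : Fin n) :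
    |a i| * |v i| ≤ ‖diagMap a v‖ := by
  simpa [diagMap_apply, abs_mul] using PiLp.norm_apply_le (diagMap a v) i

lemma mul_le_apply_zero_mul_apply_one_of_antitone (hn : 1 < n) {a : Fin n → ℝ} (ha : ∀ i, 0 ≤ a i)
    (hmono : Antitone a) {i j : Fin n} (hij : i ≠ j) :
    a i * a j ≤ a ⟨0, hn.pos⟩ * a ⟨1, hn⟩ := by
  wlog hlt : i < j generalizing i j
  · rw [mul_comm]; exact this hij.symm (hij.lt_or_gt.resolve_left hlt)
  exact mul_le_mul (hmono (Fin.mk_le_of_le_val (Nat.zero_le _)))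
    (hmono (Fin.mk_le_of_le_val (by omega)))
    (ha j) (ha _)

lemma gramDet_diagMap_le (hn : 1 < n) {a : Fin n → ℝ} (ha : ∀ i, 0 ≤ a i) (hmono : Antitone a)
    (p q : EuclideanSpace ℝ (Fin n)) :
    gramDet (diagMap a p) (diagMap a q) ≤ (a ⟨0, hn.pos⟩ * a ⟨1, hn⟩) ^ 2 * gramDet p q := by
  suffices 2 * gramDet (diagMap a p) (diagMap a q)
      ≤ (a ⟨0, hn.pos⟩ * a ⟨1, hn⟩) ^ 2 * (2 * gramDet p q) by linarith
  simp only [two_mul_gramDet_eq_sum, diagMap_apply, Finset.mul_sum]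
  refine Finset.sum_le_sum fun i _ => Finset.sum_le_sum fun j _ => ?_
  rcases eq_or_ne i j with rfl | hij
  · simp
  calc (a i * p i * (a j * q j) - a j * p j * (a i * q i)) ^ 2
      = (a i * a j) ^ 2 * (p i * q j - p j * q i) ^ 2 := by ring
    _ ≤ _ := mul_le_mul_of_nonneg_right (pow_le_pow_left₀ (mul_nonneg (ha i) (ha j))
        (mul_le_apply_zero_mul_apply_one_of_antitone hn ha hmono hij) 2) (sq_nonneg _)

lemma projDist_diagMap_le (hn : 1 < n) {a : Fin n → ℝ} (ha : ∀ i, 0 < a i) (hmono : Antitone a)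
    {ε : ℝ} (hε : 0 < ε) {p q : EuclideanSpace ℝ (Fin n)} (hp : p ≠ 0) (hq : q ≠ 0)
    (hpε : ε * ‖p‖ ≤ |p ⟨0, hn.pos⟩|) (hqε : ε * ‖q‖ ≤ |q ⟨0, hn.pos⟩|) :
    projDist (diagMap a p) (diagMap a q)
      ≤ a ⟨1, hn⟩ / (ε ^ 2 * a ⟨0, hn.pos⟩) * projDist p q := by
  set a₀ := a ⟨0, hn.pos⟩
  set a₁ := a ⟨1, hn⟩
  have ha₀ : 0 < a₀ := ha _
  have ha₁ : 0 < a₁ := ha _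
  have lower_bound (r : EuclideanSpace ℝ (Fin n)) (hr : ε * ‖r‖ ≤ |r ⟨0, hn.pos⟩|) :
      a₀ * ε * ‖r‖ ≤ ‖diagMap a r‖ := by
    calc a₀ * ε * ‖r‖ ≤ |a₀| * |r ⟨0, hn.pos⟩| := by
          rw [abs_of_pos ha₀, mul_assoc]; gcongr
      _ ≤ ‖diagMap a r‖ := abs_mul_abs_le_norm_diagMap a r _
  have sqrt_gramDet_le : √(gramDet (diagMap a p) (diagMap a q)) ≤ a₀ * a₁ * √(gramDet p q) := by
    calc √(gramDet (diagMap a p) (diagMap a q)) ≤ √((a₀ * a₁) ^ 2 * gramDet p q) :=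
          Real.sqrt_le_sqrt (gramDet_diagMap_le hn (fun i => (ha i).le) hmono p q)
      _ = a₀ * a₁ * √(gramDet p q) := by
          rw [Real.sqrt_mul (sq_nonneg _), Real.sqrt_sq (mul_pos ha₀ ha₁).le]
  calc projDist (diagMap a p) (diagMap a q)
      ≤ a₀ * a₁ * √(gramDet p q) / ((a₀ * ε * ‖p‖) * (a₀ * ε * ‖q‖)) := by
        rw [projDist_eq]
        exact div_le_div₀ (by positivity) sqrt_gramDet_le (by positivity)
          (mul_le_mul (lower_bound p hpε) (lower_bound q hqε) (by positivity) (norm_nonneg _))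
    _ = a₁ / (ε ^ 2 * a₀) * projDist p q := by
        rw [projDist_eq]; field_simp

end Diagonal

theorem contraction_on_repelling_complement
    {n : ℕ} (hn : 2 ≤ n)
    (g : EuclideanSpace ℝ (Fin n) →ₗ[ℝ] EuclideanSpace ℝ (Fin n))
    (k k' : EuclideanSpace ℝ (Fin n) ≃ₗᵢ[ℝ] EuclideanSpace ℝ (Fin n))
    (a : Fin n → ℝ) (ha : ∀ i, 0 < a i)
    (hmono : ∀ i j : Fin n, i ≤ j → a j ≤ a i)
    (hg : ∀ v, g v = k' (diagMap a (k v)))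
    (ε : ℝ) (hε : 0 < ε)
    (v w : EuclideanSpace ℝ (Fin n)) (hv : v ≠ 0) (hw : w ≠ 0)
    (hvb : ε < distToHyp v (k.symm (EuclideanSpace.single (⟨0, by omega⟩ : Fin n) 1)))
    (hwb : ε < distToHyp w (k.symm (EuclideanSpace.single (⟨0, by omega⟩ : Fin n) 1))) :
    projDist (g v) (g w) / projDist v w
      ≤ a ⟨1, by omega⟩ / (ε ^ 2 * a ⟨0, by omega⟩) := by
  have hk (x y) : projDist (k x) (k y) = projDist x y := projDist_map k.toLinearIsometry x y
  have hk' (x y) : projDist (k' x) (k' y) = projDist x y := projDist_map k'.toLinearIsometry x y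
  rw [hg, hg, hk', ← hk v w]
  refine div_le_of_le_mul₀ (projDist_nonneg _ _)
    (div_pos (ha _) (mul_pos (pow_pos hε 2) (ha _))).le ?_
  exact projDist_diagMap_le hn ha hmono hε (k.map_ne_zero_iff.mpr hv) (k.map_ne_zero_iff.mpr hw)
    (mul_norm_lt_abs_of_lt_distToHyp k hv hvb).le (mul_norm_lt_abs_of_lt_distToHyp k hw hwb).le
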